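/- With the matching m pairing +e₁ ↔ −e₂, +e₂ ↔ −e₃, +e₃ ↔ −e₁ on the octahedral graph, the successor map s on the 18 darts defined by s(a,b) = (m(b), −b) if a = −m(b) and s(a,b) = (m(b), a) otherwise, is a well-defined permutation of the 18 darts whose cycle type is (9,9): it has exactly two orbits, each of size 9, which are reverses of each other. Consequently the 9 roads and the bridge lanes form a single closed circuit of combinatorial length 18 in which roads and bridges alternate. -/

import Mathlib

/-- Vertices of the octahedral graph: `(true, i)` is `+eᵢ`, `(false, i)` is `-eᵢ`. -/
abbrev OctaVertex : Type := Bool × Fin 3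

/-- The antipodal map `v ↦ -v`. -/
def vneg (v : OctaVertex) : OctaVertex := (!v.1, v.2)

/-- The perfect matching pairing `+e₁ ↔ -e₂`, `+e₂ ↔ -e₃`, `+e₃ ↔ -e₁`
(indices taken cyclically). -/
def matching (v : OctaVertex) : OctaVertex :=
  if v.1 then (false, v.2 + 1) else (true, v.2 - 1)

/-- `a` and `b` span a road: an edge of the octahedral graph (`a ≠ b`, `a ≠ -b`)
that is not one of the three bridges of the matching. -/
def IsRoad (a b : OctaVertex) : Prop :=
  a ≠ b ∧ a ≠ vneg b ∧ a ≠ matching b ∧ b ≠ matching a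

instance : DecidablePred fun p : OctaVertex × OctaVertex => IsRoad p.1 p.2 :=
  fun p => by unfold IsRoad; infer_instance

/-- A dart: an ordered pair `(a,b)` of distinct vertices spanning a road. -/
def Dart : Type := {p : OctaVertex × OctaVertex // IsRoad p.1 p.2}

instance : DecidableEq Dart := Subtype.instDecidableEq

instance : Fintype Dart := Subtype.fintype _

/-- The reversal map on darts, `(a,b) ↦ (b,a)`. -/
def dartRev (d : Dart) : Dart :=
  ⟨(d.val.2, d.val.1), by
    obtain ⟨h1, h2, h3, h4⟩ := d.2
    have hinv : ∀ v : OctaVertex, vneg (vneg v) = v := by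
      rintro ⟨s, i⟩; cases s <;> rfl
    refine ⟨h1.symm, fun h => h2 ?_, h4, h3⟩
    have h' : d.val.2 = vneg d.val.1 := h
    rw [h', hinv]⟩

/-! Reversing a dart conjugates the successor into its inverse (crossing a bridge and turning
back lands on the reversed road), so the successor is a permutation. The index step
`i(b) - i(a) ∈ ℤ/3` of a dart `(a,b)` is nonzero, preserved by the successor and negated by
reversal, so no dart shares a cycle with its reverse. Finally `s⁹ = 1` while `s³` has no fixed
point, so every cycle has length exactly 9. -/

namespace Equiv.Perm

variable {α : Type*}

theorem SameCycle.apply_eq_of_comp_eq [Finite α] {β : Type*} {σ : Perm α} {f : α → β}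
    (hf : f ∘ σ = f) {x y : α} (h : σ.SameCycle x y) : f y = f x := by
  obtain ⟨n, rfl⟩ := h.exists_nat_pow_eq
  rw [coe_pow, ← Function.comp_apply (f := f), Function.iterate_invariant hf]

variable [Fintype α] [DecidableEq α]

theorem exists_card_support_cycleOf_eq_of_mem_cycleType {σ : Perm α} {c : ℕ}
    (hc : c ∈ σ.cycleType) : ∃ x, (σ.cycleOf x).support.card = c := by
  rw [cycleType_def, Multiset.mem_map] at hc
  obtain ⟨τ, hτ, rfl⟩ := hc
  obtain ⟨x, hx⟩ := (mem_cycleFactorsFinset_iff.1 hτ).1.nonempty_support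
  exact ⟨x, by rw [← cycle_is_cycleOf hx hτ]; rfl⟩

theorem cycleType_eq_replicate_of_pow_prime_pow_eq_one {σ : Perm α} {p k : ℕ} (hp : p.Prime)
    (hσ : σ ^ p ^ (k + 1) = 1) (hfree : ∀ x, (σ ^ p ^ k) x ≠ x) :
    σ.cycleType = Multiset.replicate (Fintype.card α / p ^ (k + 1)) (p ^ (k + 1)) := by
  have hcycles : ∀ c ∈ σ.cycleType, c = p ^ (k + 1) := by
    intro c hc
    obtain ⟨i, hi, rfl⟩ := (Nat.dvd_prime_pow hp).1
      ((dvd_of_mem_cycleType hc).trans (orderOf_dvd_of_pow_eq_one hσ))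
    obtain ⟨x, hx⟩ := exists_card_support_cycleOf_eq_of_mem_cycleType hc
    refine congrArg (p ^ ·) (hi.antisymm (not_lt.1 fun hik => hfree x ?_))
    rw [← pow_mod_card_support_cycleOf_self_apply, hx,
      Nat.mod_eq_zero_of_dvd (pow_dvd_pow p (Nat.lt_succ_iff.1 hik)), pow_zero, one_apply]
  have hsupport : σ.support = Finset.univ := Finset.eq_univ_of_forall fun x =>
    mem_support.2 fun hx => hfree x (pow_apply_eq_self_of_apply_eq_self hx _)
  have hcard : Fintype.card α = Multiset.card σ.cycleType * p ^ (k + 1) := by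
    rw [← Finset.card_univ, ← hsupport, ← sum_cycleType, Multiset.eq_replicate_card.2 hcycles]
    simp
  rw [Multiset.eq_replicate_card.2 hcycles, hcard, Nat.mul_div_cancel _ (pow_pos hp.pos _)]

end Equiv.Perm

theorem matching_matching (v : OctaVertex) : matching (matching v) = v := by
  revert v; decide

namespace Dart

def succPair (a b : OctaVertex) : OctaVertex × OctaVertex :=
  if a = vneg (matching b) then (matching b, vneg b) else (matching b, a)

theorem isRoad_succPair : ∀ a b, IsRoad a b → IsRoad (succPair a b).1 (succPair a b).2 := by
  unfold IsRoad; decide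

def succ (d : Dart) : Dart :=
  ⟨succPair d.val.1 d.val.2, isRoad_succPair _ _ d.2⟩

theorem dartRev_dartRev (d : Dart) : dartRev (dartRev d) = d := rfl

theorem succ_dartRev_succ (d : Dart) : succ (dartRev (succ d)) = dartRev d := by
  obtain ⟨⟨a, b⟩, -, hab, -, -⟩ := d
  apply Subtype.ext
  by_cases h : a = vneg (matching b)
  · simp [succ, dartRev, succPair, h, matching_matching]
  · simp [succ, dartRev, succPair, h, hab, matching_matching]

def succPerm : Equiv.Perm Dart where
  toFun := succ
  invFun d := dartRev (succ (dartRev d))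
  left_inv d := by simp only [succ_dartRev_succ, dartRev_dartRev]
  right_inv d := by simp only [succ_dartRev_succ, dartRev_dartRev]

def step (d : Dart) : Fin 3 := d.val.2.2 - d.val.1.2

theorem step_comp_succ : step ∘ succ = step := by
  funext d; revert d; decide

theorem step_dartRev_ne (d : Dart) : step (dartRev d) ≠ step d := by
  revert d; decide

theorem succPerm_pow_nine : succPerm ^ 9 = 1 := by
  decide

theorem succPerm_pow_three_apply_ne (d : Dart) : (succPerm ^ 3) d ≠ d := by
  revert d; decide

end Dart

/-- the successor rule
`s(a,b) = (m(b), -b)` if `a = -m(b)`, and `s(a,b) = (m(b), a)` otherwise,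
is a well-defined permutation of the 18 darts whose cycle type is `(9,9)`:
it has exactly two orbits, each of size 9, and they are reverses of each
other.  Consequently the 9 roads and the bridge lanes form a single closed
circuit of combinatorial length 18 in which roads and bridges alternate. -/
theorem dart_successor_two_nine_cycles :
    Fintype.card Dart = 18 ∧
    ∃ σ : Equiv.Perm Dart,
      (∀ d : Dart,
        (σ d).val =
          if d.val.1 = vneg (matching d.val.2) then
            (matching d.val.2, vneg d.val.2)
          else
            (matching d.val.2, d.val.1)) ∧
      σ.cycleType = {9, 9} ∧
      ∀ d : Dart, ¬ σ.SameCycle d (dartRev d) := by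
  have hcard : Fintype.card Dart = 18 := by decide
  refine ⟨hcard, Dart.succPerm, fun d => rfl, ?_, fun d h => Dart.step_dartRev_ne d ?_⟩
  · rw [Equiv.Perm.cycleType_eq_replicate_of_pow_prime_pow_eq_one (k := 1) Nat.prime_three
      Dart.succPerm_pow_nine Dart.succPerm_pow_three_apply_ne, hcard]
    rfl
  · exact h.apply_eq_of_comp_eq Dart.step_comp_succ
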